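/- Let H_{LC} = H_C + Σ_{l=1}^{N} I_L^{(l)} ⊗ I_C^{(l)} be a Hermitian operator on a finite-dimensional bipartite Hilbert space H_L ⊗ H_C, define the single-term Hamiltonians H^{(k)} = H_C + I_L^{(k)} ⊗ I_C^{(k)} and remainders H̄^{(k)} = H_{LC} − H^{(k)}, and let {|t_j⟩_L ⊗ |t_j⟩_C}_{j=0}^{N} be normalized product states with t_j = j·t₁. Then ‖e^{−i t_j H_{LC}} |t₀⟩_L|t₀⟩_C − |t_j⟩_L|t_j⟩_C‖₂ ≤ Σ_{k=1}^{j} ( ‖|t_k⟩_L|t_k⟩_C − e^{−i t₁ H^{(k)}} |t_{k−1}⟩_L|t_{k−1}⟩_C‖₂ + t₁ · max_{x∈[0,t₁]} ‖H̄^{(k)} e^{−i x H^{(k)}} |t_{k−1}⟩_L|t_{k−1}⟩_C‖₂ ). -/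

import Mathlib

set_option linter.unusedSectionVars false
set_option linter.unusedVariables false
set_option maxHeartbeats 1000000

open Matrix
open scoped Kronecker ComplexOrder

/-- The Euclidean (2-)norm of a finitely supported complex vector. -/
noncomputable def vnorm {ι : Type*} [Fintype ι] (v : ι → ℂ) : ℝ :=
  ‖(EuclideanSpace.equiv ι ℂ).symm v‖

/-- Tensor product of two vectors. -/
def tensVec {dL dC : ℕ} (u : Fin dL → ℂ) (v : Fin dC → ℂ) :
    Fin dL × Fin dC → ℂ := fun p => u p.1 * v p.2

/-- Unitary evolution `e^{−itH}`. -/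
noncomputable def uEvol {ι : Type*} [Fintype ι] [DecidableEq ι]
    (H : Matrix ι ι ℂ) (t : ℝ) : Matrix ι ι ℂ :=
  NormedSpace.exp ((-(Complex.I * (t : ℂ))) • H)

namespace GateAux

variable {ι : Type*} [Fintype ι] [DecidableEq ι]

lemma vnorm_add_le (u v : ι → ℂ) : vnorm (u + v) ≤ vnorm u + vnorm v := by
  simp only [vnorm, map_add]; exact norm_add_le _ _

lemma vnorm_sub_rev (u v : ι → ℂ) : vnorm (u - v) = vnorm (v - u) := by
  simp only [vnorm, map_sub]; exact norm_sub_rev _ _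

lemma vnorm_sub_le (a b c : ι → ℂ) : vnorm (a - c) ≤ vnorm (a - b) + vnorm (b - c) := by
  have h : a - c = (a - b) + (b - c) := by abel
  rw [h]; exact vnorm_add_le _ _

lemma vnorm_zero' : vnorm (0 : ι → ℂ) = 0 := by simp [vnorm]

lemma vnorm_mulVec_of_mem_unitary {U : Matrix ι ι ℂ} (hU : U ∈ Matrix.unitaryGroup ι ℂ)
    (v : ι → ℂ) : vnorm (U.mulVec v) = vnorm v := by
  classical
  let x : EuclideanSpace ℂ ι := (EuclideanSpace.equiv ι ℂ).symm v
  have hadj : Matrix.toEuclideanLin Uᴴ (Matrix.toEuclideanLin U x) = x := by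
    have h1 : Uᴴ * U = 1 := by
      simpa [Matrix.star_eq_conjTranspose] using Matrix.mem_unitaryGroup_iff'.mp hU
    show (WithLp.equiv 2 (ι → ℂ)).symm (Uᴴ *ᵥ (U *ᵥ v)) = (WithLp.equiv 2 (ι → ℂ)).symm v
    rw [Matrix.mulVec_mulVec, h1, Matrix.one_mulVec]
  have key : (inner ℂ (Matrix.toEuclideanLin U x) (Matrix.toEuclideanLin U x) : ℂ)
      = inner ℂ x x := by
    rw [← LinearMap.adjoint_inner_right, ← Matrix.toEuclideanLin_conjTranspose_eq_adjoint, hadj]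
  have hnorm : ‖Matrix.toEuclideanLin U x‖ = ‖x‖ := by
    rw [norm_eq_sqrt_re_inner (𝕜 := ℂ), norm_eq_sqrt_re_inner (𝕜 := ℂ), key]
  exact hnorm

lemma uEvol_mem_unitaryGroup {H : Matrix ι ι ℂ} (hH : H.IsHermitian) (t : ℝ) :
    uEvol H t ∈ Matrix.unitaryGroup ι ℂ := by
  letI : SeminormedRing (Matrix ι ι ℂ) := Matrix.linftyOpSemiNormedRing
  letI : NormedRing (Matrix ι ι ℂ) := Matrix.linftyOpNormedRing
  letI : NormedAlgebra ℂ (Matrix ι ι ℂ) := Matrix.linftyOpNormedAlgebra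
  letI : NormedAlgebra ℚ (Matrix ι ι ℂ) := Matrix.linftyOpNormedAlgebra
  have hskew : (-(Complex.I * (t : ℂ))) • H ∈ skewAdjoint (Matrix ι ι ℂ) := by
    rw [skewAdjoint.mem_iff]
    rw [star_smul, star_eq_conjTranspose, hH.eq]
    rw [show (star (-(Complex.I * (t : ℂ))) : ℂ) = Complex.I * (t : ℂ) by
      simp [Complex.conj_ofReal]]
    rw [← neg_smul, neg_neg]
  haveI : @ContinuousStar (Matrix ι ι ℂ)
      (Matrix.linftyOpNormedRing : NormedRing (Matrix ι ι ℂ)).toPseudoMetricSpace.toUniformSpace.toTopologicalSpace _ := ⟨by exact continuous_id.matrix_conjTranspose⟩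
  exact NormedSpace.exp_mem_unitary_of_mem_skewAdjoint hskew

lemma vnorm_uEvol_mulVec {H : Matrix ι ι ℂ} (hH : H.IsHermitian) (t : ℝ) (v : ι → ℂ) :
    vnorm ((uEvol H t).mulVec v) = vnorm v :=
  vnorm_mulVec_of_mem_unitary (uEvol_mem_unitaryGroup hH t) v

lemma uEvol_zero (H : Matrix ι ι ℂ) : uEvol H 0 = 1 := by
  simp [uEvol, NormedSpace.exp_zero]

lemma uEvol_add (H : Matrix ι ι ℂ) (s t : ℝ) :
    uEvol H (s + t) = uEvol H s * uEvol H t := by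
  have h : (-(Complex.I * ((s + t : ℝ) : ℂ))) • H
      = (-(Complex.I * (s : ℂ))) • H + (-(Complex.I * (t : ℂ))) • H := by
    rw [← add_smul]; congr 1; push_cast; ring
  rw [uEvol, h, Matrix.exp_add_of_commute _ _ (((Commute.refl H).smul_left _).smul_right _)]
  rfl

lemma uEvol_eq_real (M : Matrix ι ι ℂ) (s : ℝ) :
    uEvol M s = NormedSpace.exp (s • ((-Complex.I) • M)) := by
  rw [uEvol]
  congr 1
  rw [← smul_assoc]
  congr 1
  rw [Complex.real_smul]; ring

lemma duhamel (H K : Matrix ι ι ℂ) (hH : H.IsHermitian) (hK : K.IsHermitian)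
    (t₁ : ℝ) (ht₁ : 0 ≤ t₁) (ψ : ι → ℂ) :
    vnorm ((uEvol H t₁).mulVec ψ - (uEvol K t₁).mulVec ψ) ≤
      t₁ * ⨆ x : Set.Icc (0:ℝ) t₁, vnorm ((H - K).mulVec ((uEvol K (x:ℝ)).mulVec ψ)) := by
  classical
  letI : SeminormedRing (Matrix ι ι ℂ) := Matrix.linftyOpSemiNormedRing
  letI : NormedRing (Matrix ι ι ℂ) := Matrix.linftyOpNormedRing
  letI : NormedAlgebra ℝ (Matrix ι ι ℂ) := Matrix.linftyOpNormedAlgebra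
  letI : NormedAlgebra ℂ (Matrix ι ι ℂ) := Matrix.linftyOpNormedAlgebra
  letI : NormedAlgebra ℚ (Matrix ι ι ℂ) := Matrix.linftyOpNormedAlgebra
  haveI : Nonempty (Set.Icc (0:ℝ) t₁) := (Set.nonempty_Icc.mpr ht₁).to_subtype
  set F : ℝ → ℝ := fun x => vnorm ((H - K).mulVec ((uEvol K x).mulVec ψ)) with hFdef
  set C : ℝ := ⨆ x : Set.Icc (0:ℝ) t₁, F (x : ℝ) with hCdef
  -- continuity of F
  have hcont_exp : Continuous fun x : ℝ => uEvol K x := by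
    have h0 : Continuous fun x : ℝ => (-(Complex.I * (x : ℂ))) • K :=
      ((continuous_const.mul Complex.continuous_ofReal).neg).smul continuous_const
    exact (NormedSpace.exp_continuous).comp h0
  let Φ2 : Matrix ι ι ℂ →ₗ[ℂ] EuclideanSpace ℂ ι :=
    { toFun := fun M => (EuclideanSpace.equiv ι ℂ).symm ((H - K).mulVec (M.mulVec ψ))
      map_add' := fun M N => by
        simp [Matrix.add_mulVec, Matrix.mulVec_add, map_add]
      map_smul' := fun c M => by
        simp [Matrix.smul_mulVec, Matrix.mulVec_smul, _root_.map_smul] }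
  have hcontF : Continuous F := by
    have h1 := (LinearMap.continuous_of_finiteDimensional Φ2).comp hcont_exp
    exact h1.norm
  have hbdd : BddAbove (Set.range fun x : Set.Icc (0:ℝ) t₁ => F (x : ℝ)) :=
    (isCompact_range (hcontF.comp continuous_subtype_val)).bddAbove
  have hle : ∀ x ∈ Set.Icc (0:ℝ) t₁, F x ≤ C := fun x hx =>
    le_ciSup hbdd (⟨x, hx⟩ : Set.Icc (0:ℝ) t₁)
  -- the matrix-valued curve and its derivative
  have hmder : ∀ x : ℝ, HasDerivAt (fun y : ℝ => uEvol H (t₁ - y) * uEvol K y)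
      (uEvol H (t₁ - x) * ((Complex.I • (H - K)) * uEvol K x)) x := by
    intro x
    simp only [uEvol_eq_real]
    have hK' := hasDerivAt_exp_smul_const (𝕂 := ℝ) ((-Complex.I) • K) x
    have hH' : HasDerivAt (fun y : ℝ => NormedSpace.exp ((t₁ - y) • ((-Complex.I) • H)))
        ((-1 : ℝ) • (NormedSpace.exp ((t₁ - x) • ((-Complex.I) • H)) * ((-Complex.I) • H)))
        x := by
      have h1 := hasDerivAt_exp_smul_const (𝕂 := ℝ) ((-Complex.I) • H) (t₁ - x)
      have h2 : HasDerivAt (fun y : ℝ => t₁ - y) (-1 : ℝ) x := (hasDerivAt_id x).const_sub t₁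
      have h3 := h1.scomp x h2
      simp [Function.comp_def] at h3 ⊢
      exact h3
    have hmul := hH'.mul hK'
    convert hmul using 1
    case e'_4 => rfl
    case e'_5 => rfl
    case e'_6 => rfl
    case e'_8 => rfl
    show _ = (-1 : ℝ) • (NormedSpace.exp ((t₁ - x) • ((-Complex.I) • H)) * ((-Complex.I) • H)) *
        NormedSpace.exp (x • ((-Complex.I) • K)) + NormedSpace.exp ((t₁ - x) • ((-Complex.I) • H)) *
        (NormedSpace.exp (x • ((-Complex.I) • K)) * ((-Complex.I) • K))
    have hcomm : ((-Complex.I) • K) * NormedSpace.exp (x • ((-Complex.I) • K))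
        = NormedSpace.exp (x • ((-Complex.I) • K)) * ((-Complex.I) • K) :=
      (((Commute.refl ((-Complex.I) • K)).smul_right x).exp_right).eq
    rw [← hcomm]
    simp only [smul_sub, sub_mul, mul_sub, neg_one_smul, smul_mul_assoc, mul_smul_comm,
      neg_smul, neg_mul, mul_neg, neg_neg, smul_neg, mul_assoc]
    module
  -- push through the continuous linear map
  let Φ : Matrix ι ι ℂ →ₗ[ℂ] EuclideanSpace ℂ ι :=
    { toFun := fun M => (EuclideanSpace.equiv ι ℂ).symm (M.mulVec ψ)
      map_add' := fun M N => by simp [Matrix.add_mulVec, map_add]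
      map_smul' := fun c M => by simp [Matrix.smul_mulVec, _root_.map_smul] }
  let Φc : Matrix ι ι ℂ →L[ℝ] EuclideanSpace ℂ ι :=
    LinearMap.toContinuousLinearMap (Φ.restrictScalars ℝ)
  have hg : ∀ x : ℝ, HasDerivAt (fun y : ℝ => Φc (uEvol H (t₁ - y) * uEvol K y))
      (Φc (uEvol H (t₁ - x) * ((Complex.I • (H - K)) * uEvol K x))) x := fun x => by
    have h := (Φc.hasFDerivAt (x := uEvol H (t₁ - x) * uEvol K x)).comp_hasDerivAt x (hmder x)
    exact h
  have hnorm : ∀ x : ℝ, ‖Φc (uEvol H (t₁ - x) * ((Complex.I • (H - K)) * uEvol K x))‖ = F x := by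
    intro x
    show vnorm ((uEvol H (t₁ - x) * ((Complex.I • (H - K)) * uEvol K x)).mulVec ψ) = F x
    rw [← Matrix.mulVec_mulVec, vnorm_uEvol_mulVec hH, ← Matrix.mulVec_mulVec,
      Matrix.smul_mulVec]
    have : vnorm (Complex.I • ((H - K).mulVec ((uEvol K x).mulVec ψ)))
        = ‖Complex.I‖ * vnorm ((H - K).mulVec ((uEvol K x).mulVec ψ)) := by
      simp only [vnorm, _root_.map_smul]; exact norm_smul _ _
    rw [this, Complex.norm_I, one_mul]
  -- mean value inequality
  have hmain := norm_image_sub_le_of_norm_deriv_le_segment'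
    (f := fun y : ℝ => Φc (uEvol H (t₁ - y) * uEvol K y))
    (f' := fun x : ℝ => Φc (uEvol H (t₁ - x) * ((Complex.I • (H - K)) * uEvol K x)))
    (C := C) (a := 0) (b := t₁)
    (fun x _ => (hg x).hasDerivWithinAt)
    (fun x hx => by rw [hnorm x]; exact hle x (Set.mem_Icc_of_Ico hx))
    t₁ (Set.right_mem_Icc.mpr ht₁)
  have hend : (fun y : ℝ => Φc (uEvol H (t₁ - y) * uEvol K y)) t₁
      = (EuclideanSpace.equiv ι ℂ).symm ((uEvol K t₁).mulVec ψ) := by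
    show Φc (uEvol H (t₁ - t₁) * uEvol K t₁) = _
    rw [sub_self, uEvol_zero, one_mul]; rfl
  have hstart : (fun y : ℝ => Φc (uEvol H (t₁ - y) * uEvol K y)) 0
      = (EuclideanSpace.equiv ι ℂ).symm ((uEvol H t₁).mulVec ψ) := by
    show Φc (uEvol H (t₁ - 0) * uEvol K 0) = _
    rw [sub_zero, uEvol_zero, mul_one]; rfl
  beta_reduce at hend hstart hmain
  rw [hend, hstart] at hmain
  calc vnorm ((uEvol H t₁).mulVec ψ - (uEvol K t₁).mulVec ψ)
      = ‖(EuclideanSpace.equiv ι ℂ).symm ((uEvol K t₁).mulVec ψ)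
          - (EuclideanSpace.equiv ι ℂ).symm ((uEvol H t₁).mulVec ψ)‖ := by
        rw [vnorm, map_sub, norm_sub_rev]
    _ ≤ C * (t₁ - 0) := hmain
    _ = t₁ * C := by ring

lemma isHermitian_kronecker {m n : Type*} [Fintype m] [Fintype n]
    {A : Matrix m m ℂ} {B : Matrix n n ℂ}
    (hA : A.IsHermitian) (hB : B.IsHermitian) : (A ⊗ₖ B).IsHermitian := by
  show (A ⊗ₖ B)ᴴ = A ⊗ₖ B
  ext ⟨i1, i2⟩ ⟨j1, j2⟩
  have hA' : star (A j1 i1) = A i1 j1 := congrFun (congrFun hA i1) j1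
  have hB' : star (B j2 i2) = B i2 j2 := congrFun (congrFun hB i2) j2
  simp [Matrix.conjTranspose_apply, star_mul', hA', hB', mul_comm]

lemma telescope {N : ℕ} (Hfull : Matrix ι ι ℂ) (Hk R : ℕ → Matrix ι ι ℂ)
    (hHfull : Hfull.IsHermitian)
    (hHk : ∀ k, 1 ≤ k → k ≤ N → (Hk k).IsHermitian)
    (hR : ∀ k, 1 ≤ k → k ≤ N → R k = Hfull - Hk k)
    (t₁ : ℝ) (ht₁ : 0 ≤ t₁) (ψ : ℕ → ι → ℂ) :
    ∀ j, j ≤ N →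
      vnorm ((uEvol Hfull ((j : ℝ) * t₁)).mulVec (ψ 0) - ψ j) ≤
        ∑ k ∈ Finset.Icc 1 j,
          (vnorm (ψ k - (uEvol (Hk k) t₁).mulVec (ψ (k - 1))) +
            t₁ * ⨆ x : Set.Icc (0:ℝ) t₁,
              vnorm ((R k).mulVec ((uEvol (Hk k) (x : ℝ)).mulVec (ψ (k - 1))))) := by
  intro j
  induction j with
  | zero =>
    intro _
    simp only [Nat.cast_zero, zero_mul, uEvol_zero, Matrix.one_mulVec, sub_self]
    simp [vnorm_zero']
  | succ j ih =>
    intro hjN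
    have hj : j ≤ N := Nat.le_of_succ_le hjN
    have hk1 : 1 ≤ j + 1 := Nat.succ_le_succ (Nat.zero_le _)
    have hhermk : (Hk (j + 1)).IsHermitian := hHk (j + 1) hk1 hjN
    have hcast : ((j + 1 : ℕ) : ℝ) * t₁ = t₁ + (j : ℝ) * t₁ := by push_cast; ring
    rw [hcast, uEvol_add, ← Matrix.mulVec_mulVec]
    have hdecomp : (uEvol Hfull t₁).mulVec ((uEvol Hfull ((j : ℝ) * t₁)).mulVec (ψ 0)) - ψ (j + 1)
        = (uEvol Hfull t₁).mulVec ((uEvol Hfull ((j : ℝ) * t₁)).mulVec (ψ 0) - ψ j)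
          + ((uEvol Hfull t₁).mulVec (ψ j) - ψ (j + 1)) := by
      rw [Matrix.mulVec_sub]; abel
    rw [hdecomp]
    have step2 : vnorm ((uEvol Hfull t₁).mulVec (ψ j) - ψ (j + 1)) ≤
        vnorm (ψ (j + 1) - (uEvol (Hk (j + 1)) t₁).mulVec (ψ j)) +
          t₁ * ⨆ x : Set.Icc (0:ℝ) t₁,
            vnorm ((R (j + 1)).mulVec ((uEvol (Hk (j + 1)) (x : ℝ)).mulVec (ψ j))) := by
      have h1 := vnorm_sub_le ((uEvol Hfull t₁).mulVec (ψ j))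
        ((uEvol (Hk (j + 1)) t₁).mulVec (ψ j)) (ψ (j + 1))
      have h2 := duhamel Hfull (Hk (j + 1)) hHfull hhermk t₁ ht₁ (ψ j)
      have h3 : vnorm ((uEvol (Hk (j + 1)) t₁).mulVec (ψ j) - ψ (j + 1))
          = vnorm (ψ (j + 1) - (uEvol (Hk (j + 1)) t₁).mulVec (ψ j)) := vnorm_sub_rev _ _
      rw [h3] at h1
      simp only [hR (j + 1) hk1 hjN]
      linarith
    calc vnorm ((uEvol Hfull t₁).mulVec ((uEvol Hfull ((j : ℝ) * t₁)).mulVec (ψ 0) - ψ j)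
            + ((uEvol Hfull t₁).mulVec (ψ j) - ψ (j + 1)))
        ≤ vnorm ((uEvol Hfull t₁).mulVec ((uEvol Hfull ((j : ℝ) * t₁)).mulVec (ψ 0) - ψ j))
          + vnorm ((uEvol Hfull t₁).mulVec (ψ j) - ψ (j + 1)) := vnorm_add_le _ _
      _ = vnorm ((uEvol Hfull ((j : ℝ) * t₁)).mulVec (ψ 0) - ψ j)
          + vnorm ((uEvol Hfull t₁).mulVec (ψ j) - ψ (j + 1)) := by
            rw [vnorm_uEvol_mulVec hHfull]
      _ ≤ (∑ k ∈ Finset.Icc 1 j,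
            (vnorm (ψ k - (uEvol (Hk k) t₁).mulVec (ψ (k - 1))) +
              t₁ * ⨆ x : Set.Icc (0:ℝ) t₁,
                vnorm ((R k).mulVec ((uEvol (Hk k) (x : ℝ)).mulVec (ψ (k - 1))))))
          + (vnorm (ψ (j + 1) - (uEvol (Hk (j + 1)) t₁).mulVec (ψ j)) +
              t₁ * ⨆ x : Set.Icc (0:ℝ) t₁,
                vnorm ((R (j + 1)).mulVec ((uEvol (Hk (j + 1)) (x : ℝ)).mulVec (ψ j)))) :=
            add_le_add (ih hj) step2
      _ = ∑ k ∈ Finset.Icc 1 (j + 1),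
            (vnorm (ψ k - (uEvol (Hk k) t₁).mulVec (ψ (k - 1))) +
              t₁ * ⨆ x : Set.Icc (0:ℝ) t₁,
                vnorm ((R k).mulVec ((uEvol (Hk k) (x : ℝ)).mulVec (ψ (k - 1))))) := by
            rw [Finset.sum_Icc_succ_top hk1]
            simp

end GateAux

/-- Decoupling of the total evolution error under
`H_{LC} = 1 ⊗ H_C + Σ_{l=1}^N I_L^{(l)} ⊗ I_C^{(l)}` into per-step gate errors plus
leakage onto the inactive interaction terms. -/
theorem gate_error_decoupling {dL dC N : ℕ}
    (HC : Matrix (Fin dC) (Fin dC) ℂ) (hHC : HC.IsHermitian)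
    (IL : ℕ → Matrix (Fin dL) (Fin dL) ℂ) (IC : ℕ → Matrix (Fin dC) (Fin dC) ℂ)
    (hIL : ∀ l ∈ Finset.Icc 1 N, (IL l).IsHermitian)
    (hIC : ∀ l ∈ Finset.Icc 1 N, (IC l).IsHermitian)
    (t₁ : ℝ) (ht₁ : 0 ≤ t₁)
    (uL : ℕ → Fin dL → ℂ) (uC : ℕ → Fin dC → ℂ)
    (huL : ∀ m ≤ N, vnorm (uL m) = 1) (huC : ∀ m ≤ N, vnorm (uC m) = 1)
    (j : ℕ) (hj1 : 1 ≤ j) (hjN : j ≤ N) :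
    vnorm ((uEvol ((1 : Matrix (Fin dL) (Fin dL) ℂ) ⊗ₖ HC +
            ∑ l ∈ Finset.Icc 1 N, (IL l) ⊗ₖ (IC l)) ((j : ℝ) * t₁)).mulVec
          (tensVec (uL 0) (uC 0)) - tensVec (uL j) (uC j)) ≤
      ∑ k ∈ Finset.Icc 1 j,
        (vnorm (tensVec (uL k) (uC k) -
            (uEvol ((1 : Matrix (Fin dL) (Fin dL) ℂ) ⊗ₖ HC + (IL k) ⊗ₖ (IC k)) t₁).mulVec
              (tensVec (uL (k - 1)) (uC (k - 1)))) +
          t₁ * ⨆ x : Set.Icc (0:ℝ) t₁,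
            vnorm ((∑ l ∈ (Finset.Icc 1 N).erase k, (IL l) ⊗ₖ (IC l)).mulVec
              ((uEvol ((1 : Matrix (Fin dL) (Fin dL) ℂ) ⊗ₖ HC + (IL k) ⊗ₖ (IC k))
                  (x : ℝ)).mulVec (tensVec (uL (k - 1)) (uC (k - 1)))))) := by
  classical
  have hA1 : ((1 : Matrix (Fin dL) (Fin dL) ℂ) ⊗ₖ HC).IsHermitian :=
    GateAux.isHermitian_kronecker Matrix.isHermitian_one hHC
  have hB : ∀ l ∈ Finset.Icc 1 N, ((IL l) ⊗ₖ (IC l)).IsHermitian := fun l hl =>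
    GateAux.isHermitian_kronecker (hIL l hl) (hIC l hl)
  have hsum : (∑ l ∈ Finset.Icc 1 N, (IL l) ⊗ₖ (IC l)).IsHermitian := by
    show _ᴴ = _
    rw [Matrix.conjTranspose_sum]
    exact Finset.sum_congr rfl fun l hl => (hB l hl).eq
  have hHfull : ((1 : Matrix (Fin dL) (Fin dL) ℂ) ⊗ₖ HC +
      ∑ l ∈ Finset.Icc 1 N, (IL l) ⊗ₖ (IC l)).IsHermitian := hA1.add hsum
  have hHk : ∀ k, 1 ≤ k → k ≤ N →
      ((1 : Matrix (Fin dL) (Fin dL) ℂ) ⊗ₖ HC + (IL k) ⊗ₖ (IC k)).IsHermitian := fun k h1 h2 =>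
    hA1.add (hB k (Finset.mem_Icc.mpr ⟨h1, h2⟩))
  have hR : ∀ k, 1 ≤ k → k ≤ N →
      (∑ l ∈ (Finset.Icc 1 N).erase k, (IL l) ⊗ₖ (IC l)) =
        ((1 : Matrix (Fin dL) (Fin dL) ℂ) ⊗ₖ HC + ∑ l ∈ Finset.Icc 1 N, (IL l) ⊗ₖ (IC l)) -
          ((1 : Matrix (Fin dL) (Fin dL) ℂ) ⊗ₖ HC + (IL k) ⊗ₖ (IC k)) := by
    intro k h1 h2
    have hmem : k ∈ Finset.Icc 1 N := Finset.mem_Icc.mpr ⟨h1, h2⟩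
    have hsplit := Finset.add_sum_erase (Finset.Icc 1 N) (fun l => (IL l) ⊗ₖ (IC l)) hmem
    rw [← hsplit]
    abel
  exact GateAux.telescope
    ((1 : Matrix (Fin dL) (Fin dL) ℂ) ⊗ₖ HC + ∑ l ∈ Finset.Icc 1 N, (IL l) ⊗ₖ (IC l))
    (fun k => (1 : Matrix (Fin dL) (Fin dL) ℂ) ⊗ₖ HC + (IL k) ⊗ₖ (IC k))
    (fun k => ∑ l ∈ (Finset.Icc 1 N).erase k, (IL l) ⊗ₖ (IC l))
    hHfull hHk hR t₁ ht₁ (fun m => tensVec (uL m) (uC m)) j hjN
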